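/- arXiv:1205.6837 — 5 statements merged into one kernel-verified Lean document; each statement's English description precedes it below -/
import Mathlib

section
/- Let n ≥ 3 and let R = ℤ[q,q⁻¹]. Let 𝓗ₙ be the Iwahori–Hecke algebra of Sₙ, namely the unital associative R-algebra with generators T₁,…,T_{n−1} subject to the relations T_iT_j = T_jT_i for |i−j| ≥ 2, T_iT_{i+1}T_i = T_{i+1}T_iT_{i+1} for 1 ≤ i ≤ n−2, and T_i² = q + (q−1)T_i for 1 ≤ i ≤ n−1 (realized, e.g., as a RingQuot of the free R-algebra on n−1 generators by these relations). Then there does not exist a multiplicative R-basis of the centre Z(𝓗ₙ). -/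
/-!
`𝓗ₙ` has the two one-dimensional characters `T_i ↦ q` and `T_i ↦ -1`, and for each of them a
central "symmetrizer" `∑_{w ∈ Sₙ} a^{ℓ(w)} T_w` (with `a = 1`, resp. `a = -q⁻¹`) on which every
element acts through the character. Let `b` be a multiplicative basis of the centre and `χ` one
of the characters, with symmetrizer `w`. Multiplication by `bᵢ` maps basis vectors to basis
vectors, so every coordinate of `bᵢ w = χ(bᵢ) • w` is a sum of coordinates of `w`. Hence
`χ(bᵢ)` stabilises the finitely generated `ℤ`-module spanned by those coordinates, and a degree
argument in `ℤ[q,q⁻¹]` shows that it is an integer. The two characters agree modulo `q + 1`, so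
their integer values on every `bᵢ` coincide, and they agree on the whole centre. But the first
character does not vanish on the `q`-symmetrizer while the second does.
-/

open LaurentPolynomial

/-- The defining relations of the Iwahori–Hecke algebra of `Sₙ` over
`R = ℤ[q,q⁻¹]`, on the free `R`-algebra with generators `T₁, …, T_{n-1}`:
the commuting relations `TᵢTⱼ = TⱼTᵢ` for `|i - j| ≥ 2`, the braid relations
`TᵢTᵢ₊₁Tᵢ = Tᵢ₊₁TᵢTᵢ₊₁`, and the quadratic relations `Tᵢ² = q + (q-1)Tᵢ`. -/
inductive HeckeRel (n : ℕ) :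
    FreeAlgebra (LaurentPolynomial ℤ) (Fin (n - 1)) →
      FreeAlgebra (LaurentPolynomial ℤ) (Fin (n - 1)) → Prop
  | comm (i j : Fin (n - 1)) (h : (i : ℕ) + 2 ≤ (j : ℕ) ∨ (j : ℕ) + 2 ≤ (i : ℕ)) :
      HeckeRel n
        (FreeAlgebra.ι (LaurentPolynomial ℤ) i * FreeAlgebra.ι (LaurentPolynomial ℤ) j)
        (FreeAlgebra.ι (LaurentPolynomial ℤ) j * FreeAlgebra.ι (LaurentPolynomial ℤ) i)
  | braid (i j : Fin (n - 1)) (h : (i : ℕ) + 1 = (j : ℕ)) :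
      HeckeRel n
        (FreeAlgebra.ι (LaurentPolynomial ℤ) i * FreeAlgebra.ι (LaurentPolynomial ℤ) j *
          FreeAlgebra.ι (LaurentPolynomial ℤ) i)
        (FreeAlgebra.ι (LaurentPolynomial ℤ) j * FreeAlgebra.ι (LaurentPolynomial ℤ) i *
          FreeAlgebra.ι (LaurentPolynomial ℤ) j)
  | quad (i : Fin (n - 1)) :
      HeckeRel n
        (FreeAlgebra.ι (LaurentPolynomial ℤ) i * FreeAlgebra.ι (LaurentPolynomial ℤ) i)
        (algebraMap (LaurentPolynomial ℤ) _ (T 1) +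
          algebraMap (LaurentPolynomial ℤ) _ (T 1 - 1) * FreeAlgebra.ι (LaurentPolynomial ℤ) i)

/-- The Iwahori–Hecke algebra `𝓗ₙ` of the symmetric group `Sₙ` over
`R = ℤ[q,q⁻¹]`, as the quotient of the free `R`-algebra on `T₁, …, T_{n-1}` by
the braid and quadratic relations. -/
noncomputable abbrev HeckeAlgebra (n : ℕ) : Type := RingQuot (HeckeRel n)

open MulOpposite

section HeckeFamily

variable {R A : Type*} [CommRing R] [Semiring A] [Algebra R A]

structure IsHeckeFamily (q : R) (N : ℕ) (t : ℕ → A) : Prop where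
  commute : ∀ i j, i + 2 ≤ j → Commute (t i) (t j)
  braid : ∀ i, i + 1 < N → t i * t (i + 1) * t i = t (i + 1) * t i * t (i + 1)
  quad : ∀ i, i < N → t i * t i = q • 1 + (q - 1) • t i

theorem IsHeckeFamily.op {q : R} {N : ℕ} {t : ℕ → A} (ht : IsHeckeFamily q N t) :
    IsHeckeFamily q N (op ∘ t) where
  commute i j h := (ht.commute i j h).op
  braid i h := by
    simp only [Function.comp_apply, ← op_mul, ← mul_assoc]
    rw [ht.braid i h]
  quad i h := by simp [← op_mul, ht.quad i h]

variable (a : R) (t : ℕ → A)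

/-- `∑ a^{ℓ(w)} T_w` over the minimal coset representatives `1, sₘ, sₘsₘ₋₁, …, sₘ⋯s₁` of
`Sₘ` in `Sₘ₊₁` (with `t i = T_{i+1}`), so that `symmetrizer a t m = ∑_{w ∈ Sₘ} a^{ℓ(w)} T_w`. -/
def cosetSum : ℕ → A
  | 0 => 1
  | m + 1 => 1 + a • (t m * cosetSum m)

def revCosetSum : ℕ → A
  | 0 => 1
  | m + 1 => 1 + a • (revCosetSum m * t m)

def symmetrizer : ℕ → A
  | 0 => 1
  | m + 1 => symmetrizer m * cosetSum a t m

theorem cosetSum_op (m : ℕ) : cosetSum a (op ∘ t) m = op (revCosetSum a t m) := by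
  induction m with
  | zero => rfl
  | succ m ih => simp [cosetSum, revCosetSum, ih]

variable {a t}

theorem commute_cosetSum (hcomm : ∀ i j, i + 2 ≤ j → Commute (t i) (t j)) :
    ∀ {m j : ℕ}, m < j → Commute (t j) (cosetSum a t m)
  | 0, _, _ => Commute.one_right _
  | m + 1, j, h => (Commute.one_right _).add_right
      (((hcomm m j (by omega)).symm.mul_right (commute_cosetSum hcomm (by omega))).smul_right a)

theorem commute_revCosetSum (hcomm : ∀ i j, i + 2 ≤ j → Commute (t i) (t j)) :
    ∀ {m j : ℕ}, m < j → Commute (t j) (revCosetSum a t m)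
  | 0, _, _ => Commute.one_right _
  | m + 1, j, h => (Commute.one_right _).add_right
      (((commute_revCosetSum hcomm (by omega)).mul_right (hcomm m j (by omega)).symm).smul_right a)

theorem commute_symmetrizer (hcomm : ∀ i j, i + 2 ≤ j → Commute (t i) (t j)) :
    ∀ {m j : ℕ}, m ≤ j → Commute (t j) (symmetrizer a t m)
  | 0, _, _ => Commute.one_right _
  | m + 1, _, h => (commute_symmetrizer hcomm (by omega)).mul_right (commute_cosetSum hcomm h)

theorem symmetrizer_succ_eq_revCosetSum_mul (hcomm : ∀ i j, i + 2 ≤ j → Commute (t i) (t j)) :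
    ∀ m, symmetrizer a t (m + 1) = revCosetSum a t m * symmetrizer a t m
  | 0 => by simp [symmetrizer, revCosetSum, cosetSum]
  | m + 1 => by
    have ih := symmetrizer_succ_eq_revCosetSum_mul hcomm m
    calc symmetrizer a t (m + 2)
        = symmetrizer a t (m + 1) * (1 + a • (t m * cosetSum a t m)) := rfl
      _ = symmetrizer a t (m + 1) +
            a • (revCosetSum a t m * (symmetrizer a t m * t m) * cosetSum a t m) := by
        rw [mul_add, mul_one, mul_smul_comm, ih]
        simp only [mul_assoc]
      _ = revCosetSum a t (m + 1) * symmetrizer a t (m + 1) := by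
        rw [(commute_symmetrizer hcomm le_rfl).eq.symm, revCosetSum, add_mul, one_mul,
          smul_mul_assoc, symmetrizer, mul_assoc, mul_assoc, mul_assoc]

theorem symmetrizer_op (hcomm : ∀ i j, i + 2 ≤ j → Commute (t i) (t j)) (m : ℕ) :
    symmetrizer a (op ∘ t) m = op (symmetrizer a t m) := by
  induction m with
  | zero => rfl
  | succ m ih =>
    rw [symmetrizer, ih, cosetSum_op, ← op_mul, ← symmetrizer_succ_eq_revCosetSum_mul hcomm]

theorem map_cosetSum {c : R} {N : ℕ} (χ : A →ₐ[R] R) (hχ : ∀ i < N, χ (t i) = c) :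
    ∀ {m : ℕ}, m ≤ N → χ (cosetSum a t m) = ∑ i ∈ Finset.range (m + 1), (a * c) ^ i
  | 0, _ => by simp [cosetSum]
  | m + 1, hm => by
    rw [cosetSum, map_add, map_one, map_smul, map_mul, hχ m (by omega),
      map_cosetSum χ hχ (by omega), geom_sum_succ (n := m + 1), smul_eq_mul]
    ring

theorem map_symmetrizer {c : R} {N : ℕ} (χ : A →ₐ[R] R) (hχ : ∀ i < N, χ (t i) = c) :
    ∀ {m : ℕ}, m ≤ N + 1 →
      χ (symmetrizer a t m) = ∏ k ∈ Finset.range m, ∑ i ∈ Finset.range (k + 1), (a * c) ^ i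
  | 0, _ => by simp [symmetrizer]
  | m + 1, hm => by
    rw [symmetrizer, map_mul, map_symmetrizer χ hχ (by omega), map_cosetSum χ hχ (by omega),
      Finset.prod_range_succ]

section Eigen

variable {q c : R} {N : ℕ} (hac : a * q = c) (hca : 1 + c - a = a * c)
include hac hca

theorem mul_one_add_smul_eq_smul {s : A} (hs : s * s = q • 1 + (q - 1) • s) :
    s * (1 + a • s) = c • (1 + a • s) := by
  rw [mul_add, mul_one, mul_smul_comm, hs]
  subst hac
  match_scalars <;> first | ring1 | linear_combination hca

theorem mul_revCosetSum_mul_eq_smul (ht : IsHeckeFamily q N t) {j : ℕ} (hj : j + 1 < N)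
    {x : A} (hx : t j * x = c • x) :
    t (j + 1) * (revCosetSum a t (j + 2) * x) = c • (revCosetSum a t (j + 2) * x) := by
  have hcomm : ∀ y, t (j + 1) * (revCosetSum a t j * y) = revCosetSum a t j * (t (j + 1) * y) :=
    fun y => by
      rw [← mul_assoc, (commute_revCosetSum ht.commute (Nat.lt_succ_self j)).eq, mul_assoc]
  have hbraid : t (j + 1) * (t j * (t (j + 1) * x)) = c • (t j * (t (j + 1) * x)) := by
    rw [← mul_assoc, ← mul_assoc, ← ht.braid j hj, mul_assoc, mul_assoc, hx, mul_smul_comm,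
      mul_smul_comm]
  have hquad : t (j + 1) * (t (j + 1) * x) = q • x + (q - 1) • (t (j + 1) * x) := by
    rw [← mul_assoc, ht.quad _ hj, add_mul, smul_mul_assoc, smul_mul_assoc, one_mul]
  simp only [revCosetSum, add_mul, mul_add, one_mul, smul_mul_assoc, mul_smul_comm, mul_assoc,
    hcomm, hbraid, hquad, smul_add, smul_smul]
  subst hac
  match_scalars <;> first | ring1 | linear_combination hca

theorem mul_symmetrizer_eq_smul (ht : IsHeckeFamily q N t) :
    ∀ {m j : ℕ}, j + 1 < m → m ≤ N + 1 → t j * symmetrizer a t m = c • symmetrizer a t m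
  | m + 1, j, hj, hm => by
    rcases (by omega : j + 1 < m ∨ m = j + 1) with h | rfl
    · rw [symmetrizer, ← mul_assoc, mul_symmetrizer_eq_smul ht h (by omega), smul_mul_assoc]
    rw [symmetrizer_succ_eq_revCosetSum_mul ht.commute]
    cases j with
    | zero =>
      have h := mul_one_add_smul_eq_smul hac hca (ht.quad 0 (by omega))
      simp only [revCosetSum, one_mul, ← mul_assoc, h, smul_mul_assoc]
    | succ j =>
      exact mul_revCosetSum_mul_eq_smul hac hca ht (by omega)
        (mul_symmetrizer_eq_smul ht (by omega) (by omega))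

theorem symmetrizer_mul_eq_smul (ht : IsHeckeFamily q N t) {m j : ℕ} (hj : j + 1 < m)
    (hm : m ≤ N + 1) : symmetrizer a t m * t j = c • symmetrizer a t m := by
  apply op_injective
  simpa [symmetrizer_op ht.commute] using mul_symmetrizer_eq_smul hac hca ht.op hj hm

end Eigen

end HeckeFamily

namespace LaurentPolynomial

variable {K : Type*} [CommRing K]

theorem exists_le_supported_of_fg {N : Submodule K K[T;T⁻¹]} (hN : N.FG) :
    ∃ W : Finset ℤ, N ≤ AddMonoidAlgebra.supported K K (W : Set ℤ) := by
  classical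
  obtain ⟨s, rfl⟩ := hN
  refine ⟨s.biUnion fun y => y.coeff.support, Submodule.span_le.mpr fun y hy => ?_⟩
  rw [SetLike.mem_coe, AddMonoidAlgebra.mem_supported, Finset.coe_subset]
  exact Finset.subset_biUnion_of_mem (fun y : K[T;T⁻¹] => y.coeff.support) hy

variable [NoZeroDivisors K]

theorem isGreatest_support_mul {f g : K[T;T⁻¹]} {d e : ℤ}
    (hf : IsGreatest (f.coeff.support : Set ℤ) d) (hg : IsGreatest (g.coeff.support : Set ℤ) e) :
    IsGreatest ((f * g).coeff.support : Set ℤ) (d + e) := by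
  classical
  have hunique : UniqueAdd f.coeff.support g.coeff.support d e := by
    intro a b ha hb hab
    have := hf.2 ha
    have := hg.2 hb
    omega
  refine ⟨?_, fun z hz => ?_⟩
  · rw [Finset.mem_coe, Finsupp.mem_support_iff,
      AddMonoidAlgebra.coeff_mul_add_of_uniqueAdd hunique]
    exact mul_ne_zero (Finsupp.mem_support_iff.mp hf.1) (Finsupp.mem_support_iff.mp hg.1)
  · obtain ⟨a, ha, b, hb, rfl⟩ :=
      Finset.mem_add.mp (AddMonoidAlgebra.support_coeff_mul_subset f g hz)
    have := hf.2 ha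
    have := hg.2 hb
    omega

theorem isGreatest_support_pow_mul {x c : K[T;T⁻¹]} {d e : ℤ}
    (hx : IsGreatest (x.coeff.support : Set ℤ) d) (hc : IsGreatest (c.coeff.support : Set ℤ) e)
    (k : ℕ) : IsGreatest ((x ^ k * c).coeff.support : Set ℤ) (k * d + e) := by
  induction k with
  | zero => simpa using hc
  | succ k ih =>
    rw [pow_succ', mul_assoc]
    convert isGreatest_support_mul hx ih using 1
    push_cast
    ring

theorem le_zero_of_mem_support_of_mul_mem {N : Submodule K K[T;T⁻¹]} (hN : N ≠ ⊥) (hN' : N.FG)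
    {x : K[T;T⁻¹]} (hx : ∀ y ∈ N, x * y ∈ N) {d : ℤ} (hd : d ∈ x.coeff.support) : d ≤ 0 := by
  obtain ⟨W, hW⟩ := exists_le_supported_of_fg hN'
  obtain ⟨c, hcN, hc⟩ := Submodule.exists_mem_ne_zero_of_ne_bot hN
  have hsupport : ∀ f : K[T;T⁻¹], f ≠ 0 → f.coeff.support.Nonempty := fun f hf =>
    Finsupp.support_nonempty_iff.mpr (mt AddMonoidAlgebra.coeff_eq_zero.mp hf)
  have hx0 : x ≠ 0 := by
    rintro rfl
    simp at hd
  set D := x.coeff.support.max' (hsupport x hx0)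
  set e := c.coeff.support.max' (hsupport c hc)
  have hpow : ∀ k : ℕ, x ^ k * c ∈ N := fun k => by
    induction k with
    | zero => simpa using hcN
    | succ k ih => simpa only [pow_succ', mul_assoc] using hx _ ih
  have hmemW : ∀ k : ℕ, (k : ℤ) * D + e ∈ W := fun k =>
    AddMonoidAlgebra.mem_supported.mp (hW (hpow k))
      (isGreatest_support_pow_mul (Finset.isGreatest_max' _ _) (Finset.isGreatest_max' _ _) k).1
  have hD : D ≤ 0 := by
    by_contra! hD
    have hinj : Function.Injective fun k : ℕ => (k : ℤ) * D + e := fun k l hkl => by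
      exact_mod_cast mul_right_cancel₀ hD.ne' (add_right_cancel hkl)
    exact Set.infinite_range_of_injective hinj
      (W.finite_toSet.subset (Set.range_subset_iff.mpr hmemW))
  exact (Finset.le_max' _ d hd).trans hD

theorem exists_eq_C_of_mul_mem_submodule (N : Submodule K K[T;T⁻¹]) (hN : N ≠ ⊥) (hN' : N.FG)
    (x : K[T;T⁻¹]) (hx : ∀ y ∈ N, x * y ∈ N) : ∃ z : K, x = C z := by
  let e : K[T;T⁻¹] ≃ₗ[K] K[T;T⁻¹] := invert.toLinearEquiv
  -- `q ↦ q⁻¹` turns the lower bound on the support of `x` into an upper bound.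
  have hinv : ∀ y ∈ N.map (e : K[T;T⁻¹] →ₗ[K] K[T;T⁻¹]),
      invert x * y ∈ N.map (e : K[T;T⁻¹] →ₗ[K] K[T;T⁻¹]) := by
    rintro _ ⟨y, hy, rfl⟩
    exact ⟨x * y, hx y hy, by simp [e]⟩
  have hsupp : x.coeff.support ⊆ {0} := by
    intro d hd
    have hle := le_zero_of_mem_support_of_mul_mem hN hN' hx hd
    have hge := le_zero_of_mem_support_of_mul_mem (Submodule.map_eq_bot_iff.not.mpr hN)
      (hN'.map _) hinv (d := -d) (by simpa using hd)
    rw [Finset.mem_singleton]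
    omega
  refine ⟨x.coeff 0, ?_⟩
  rw [← single_eq_C]
  exact AddMonoidAlgebra.coeff_injective (Finsupp.support_subset_singleton.mp hsupp)

end LaurentPolynomial

theorem Module.Basis.mul_mem_span_range_repr {ι S R A : Type*} [CommSemiring S] [CommSemiring R]
    [Algebra S R] [Semiring A] [Algebra R A] (b : Module.Basis ι R A)
    (hb : ∀ i j, ∃ k, b i * b j = b k) {w : A} {i : ι} {r : R} (hw : b i * w = r • w) :
    ∀ y ∈ Submodule.span S (Set.range (b.repr w)),
      r * y ∈ Submodule.span S (Set.range (b.repr w)) := by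
  classical
  choose k hk using hb i
  have hrepr : r • b.repr w = Finsupp.mapDomain k (b.repr w) := by
    rw [← map_smul, ← hw, ← b.repr_linearCombination (Finsupp.mapDomain k _),
      Finsupp.linearCombination_mapDomain]
    conv_lhs => rw [← b.linearCombination_repr w]
    simp only [Finsupp.linearCombination_apply, Finsupp.sum, Finset.mul_sum, mul_smul_comm,
      Function.comp_apply, hk]
  have hcoeff : ∀ m, r * b.repr w m ∈ Submodule.span S (Set.range (b.repr w)) := by
    intro m
    rw [← smul_eq_mul, ← Finsupp.smul_apply, hrepr, Finsupp.mapDomain, Finsupp.sum_apply]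
    refine Submodule.sum_mem _ fun j _ => ?_
    dsimp only
    rw [Finsupp.single_apply]
    split_ifs
    · exact Submodule.subset_span ⟨j, rfl⟩
    · exact Submodule.zero_mem _
  intro y hy
  exact (Submodule.span_le (p := (Submodule.span S _).comap (LinearMap.mulLeft S r))).mpr
    (Set.range_subset_iff.mpr hcoeff) hy

theorem Module.Basis.exists_eq_C_of_mul_eq_smul {K ι A : Type*} [CommRing K] [NoZeroDivisors K]
    [Semiring A] [Algebra K[T;T⁻¹] A] (b : Module.Basis ι K[T;T⁻¹] A)
    (hb : ∀ i j, ∃ k, b i * b j = b k) {w : A} (hw : w ≠ 0) {i : ι} {r : K[T;T⁻¹]}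
    (hr : b i * w = r • w) : ∃ z : K, r = C z := by
  refine exists_eq_C_of_mul_mem_submodule _ ?_ (Submodule.fg_span (b.repr w).finite_range) r
    (b.mul_mem_span_range_repr hb hr)
  rw [Ne, Submodule.span_eq_bot]
  intro h
  exact hw (b.repr.injective (Finsupp.ext fun m => by simpa using h _ ⟨m, rfl⟩))

namespace HeckeAlgebra

variable (n : ℕ)

/-- `gen n i` is `T_{i+1}`; outside the range `i < n - 1` it is `1`, so that the far commutation
relation holds for all indices. -/
noncomputable def gen (i : ℕ) : HeckeAlgebra n :=
  if h : i < n - 1 then RingQuot.mkAlgHom ℤ[T;T⁻¹] (HeckeRel n) (FreeAlgebra.ι ℤ[T;T⁻¹] ⟨i, h⟩)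
  else 1

theorem isHeckeFamily_gen : IsHeckeFamily (T 1 : ℤ[T;T⁻¹]) (n - 1) (gen n) where
  commute i j h := by
    by_cases hj : j < n - 1
    · have hi : i < n - 1 := by omega
      simp only [gen, dif_pos hi, dif_pos hj, Commute, SemiconjBy, ← map_mul]
      exact RingQuot.mkAlgHom_rel _ (HeckeRel.comm ⟨i, hi⟩ ⟨j, hj⟩ (Or.inl h))
    · simp only [gen, dif_neg hj]
      exact Commute.one_right _
  braid i h := by
    simp only [gen, dif_pos h, dif_pos (by omega : i < n - 1), ← map_mul]
    exact RingQuot.mkAlgHom_rel _ (HeckeRel.braid ⟨i, _⟩ ⟨i + 1, h⟩ rfl)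
  quad i h := by
    simp only [gen, dif_pos h, ← map_mul]
    rw [RingQuot.mkAlgHom_rel _ (HeckeRel.quad ⟨i, h⟩)]
    simp [Algebra.smul_def]

@[elab_as_elim]
theorem induction {P : HeckeAlgebra n → Prop} (algebraMap : ∀ r, P (algebraMap ℤ[T;T⁻¹] _ r))
    (gen : ∀ i < n - 1, P (gen n i)) (add : ∀ x y, P x → P y → P (x + y))
    (mul : ∀ x y, P x → P y → P (x * y)) (x : HeckeAlgebra n) : P x := by
  obtain ⟨y, rfl⟩ := RingQuot.mkAlgHom_surjective ℤ[T;T⁻¹] (HeckeRel n) x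
  induction y using FreeAlgebra.induction with
  | grade0 r => rw [AlgHom.commutes]; exact algebraMap r
  | grade1 i => simpa [HeckeAlgebra.gen, i.isLt] using gen i i.isLt
  | mul x y hx hy => rw [map_mul]; exact mul _ _ hx hy
  | add x y hx hy => rw [map_add]; exact add _ _ hx hy

variable {n} {c : ℤ[T;T⁻¹]} (hc : c * c = T 1 + (T 1 - 1) * c)

variable (n) in
noncomputable def character : HeckeAlgebra n →ₐ[ℤ[T;T⁻¹]] ℤ[T;T⁻¹] :=
  RingQuot.liftAlgHom ℤ[T;T⁻¹] ⟨FreeAlgebra.lift ℤ[T;T⁻¹] fun _ => c, fun _ _ h => by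
    induction h with
    | comm => simp
    | braid => simp
    | quad => simp [hc, Algebra.algebraMap_self]⟩

theorem character_gen {i : ℕ} (h : i < n - 1) : character n hc (gen n i) = c := by
  simp [character, gen, h]

theorem map_character_eq {S : Type*} [Semiring S] (f : ℤ[T;T⁻¹] →+* S) {c' : ℤ[T;T⁻¹]}
    (hc' : c' * c' = T 1 + (T 1 - 1) * c') (hf : f c = f c') (x : HeckeAlgebra n) :
    f (character n hc x) = f (character n hc' x) := by
  induction x using HeckeAlgebra.induction with
  | algebraMap r => simp
  | gen i hi => rw [character_gen hc hi, character_gen hc' hi, hf]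
  | add x y hx hy => rw [map_add, map_add, map_add, map_add, hx, hy]
  | mul x y hx hy => rw [map_mul, map_mul, map_mul, map_mul, hx, hy]

theorem character_symmetrizer (a : ℤ[T;T⁻¹]) :
    character n hc (symmetrizer a (gen n) n) =
      ∏ k ∈ Finset.range n, ∑ i ∈ Finset.range (k + 1), (a * c) ^ i :=
  map_symmetrizer (N := n - 1) (m := n) _ (fun _ hi => character_gen hc hi) (by omega)

theorem character_symmetrizer_ne_zero {a : ℤ[T;T⁻¹]} (h : eval₂ (RingHom.id ℤ) 1 (a * c) = 1) :
    character n hc (symmetrizer a (gen n) n) ≠ 0 := by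
  rw [character_symmetrizer]
  refine Finset.prod_ne_zero_iff.mpr fun k _ hk => ?_
  have := congrArg (eval₂ (RingHom.id ℤ) 1) hk
  simp [map_sum, map_pow, h] at this
  omega

theorem character_symmetrizer_eq_zero {a : ℤ[T;T⁻¹]} (hn : 2 ≤ n) (h : 1 + a * c = 0) :
    character n hc (symmetrizer a (gen n) n) = 0 := by
  rw [character_symmetrizer]
  exact Finset.prod_eq_zero (i := 1) (Finset.mem_range.mpr (by omega))
    (by rw [geom_sum_two, add_comm, h])

section Symmetrizer

variable {a : ℤ[T;T⁻¹]} (hac : a * T 1 = c) (hca : 1 + c - a = a * c)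
include hac hca

theorem mul_symmetrizer_eq_character_smul (x : HeckeAlgebra n) :
    x * symmetrizer a (gen n) n = character n hc x • symmetrizer a (gen n) n := by
  induction x using HeckeAlgebra.induction with
  | algebraMap r =>
    rw [AlgHom.commutes, Algebra.algebraMap_self, RingHom.id_apply, ← Algebra.smul_def]
  | gen i hi =>
    rw [character_gen hc hi]
    exact mul_symmetrizer_eq_smul hac hca (isHeckeFamily_gen n) (by omega) (by omega)
  | add x y hx hy => rw [add_mul, hx, hy, map_add, add_smul]
  | mul x y hx hy => rw [mul_assoc, hy, mul_smul_comm, hx, smul_smul, map_mul, mul_comm]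

theorem symmetrizer_mul_eq_character_smul (x : HeckeAlgebra n) :
    symmetrizer a (gen n) n * x = character n hc x • symmetrizer a (gen n) n := by
  induction x using HeckeAlgebra.induction with
  | algebraMap r =>
    rw [AlgHom.commutes, Algebra.algebraMap_self, RingHom.id_apply, ← Algebra.commutes,
      ← Algebra.smul_def]
  | gen i hi =>
    rw [character_gen hc hi]
    exact symmetrizer_mul_eq_smul hac hca (isHeckeFamily_gen n) (by omega) (by omega)
  | add x y hx hy => rw [mul_add, hx, hy, map_add, add_smul]
  | mul x y hx hy => rw [← mul_assoc, hx, smul_mul_assoc, hy, smul_smul, map_mul]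

theorem symmetrizer_mem_center :
    symmetrizer a (gen n) n ∈ Subalgebra.center ℤ[T;T⁻¹] (HeckeAlgebra n) := by
  have hc : c * c = T 1 + (T 1 - 1) * c := by
    subst hac
    linear_combination (-T 1 : ℤ[T;T⁻¹]) * hca
  refine Subalgebra.mem_center_iff.mpr fun x => ?_
  rw [mul_symmetrizer_eq_character_smul hc hac hca, symmetrizer_mul_eq_character_smul hc hac hca]

theorem exists_character_basis_eq_C {ι : Type*}
    (b : Module.Basis ι ℤ[T;T⁻¹] (Subalgebra.center ℤ[T;T⁻¹] (HeckeAlgebra n)))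
    (hb : ∀ i j, ∃ k, b i * b j = b k) (hS : character n hc (symmetrizer a (gen n) n) ≠ 0)
    (i : ι) : ∃ z : ℤ, character n hc (b i) = C z := by
  let w : Subalgebra.center ℤ[T;T⁻¹] (HeckeAlgebra n) := ⟨_, symmetrizer_mem_center hac hca⟩
  have hw : w ≠ 0 := fun h => hS (by simpa [w] using congrArg (fun z => character n hc z.1) h)
  exact b.exists_eq_C_of_mul_eq_smul hb hw
    (Subtype.ext (mul_symmetrizer_eq_character_smul hc hac hca (b i : HeckeAlgebra n)))

end Symmetrizer

end HeckeAlgebra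

open HeckeAlgebra in
set_option synthInstance.maxHeartbeats 1000000 in
/-- For `n ≥ 3` there is no multiplicative `R`-basis of the centre of the
Iwahori–Hecke algebra `𝓗ₙ` of `Sₙ`, where `R = ℤ[q,q⁻¹]`. -/
theorem no_multiplicative_basis_center_hecke (n : ℕ) (hn : 3 ≤ n) :
    ¬ ∃ (ι : Type) (b : Module.Basis ι (LaurentPolynomial ℤ)
        (Subalgebra.center (LaurentPolynomial ℤ) (HeckeAlgebra n))),
      ∀ i j : ι, ∃ k : ι, b i * b j = b k := by
  rintro ⟨ι, b, hb⟩
  have hq : (T 1 : ℤ[T;T⁻¹]) * T 1 = T 1 + (T 1 - 1) * T 1 := by ring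
  have hs : (-1 : ℤ[T;T⁻¹]) * -1 = T 1 + (T 1 - 1) * -1 := by ring
  have hqs : -T (-1) * T 1 = (-1 : ℤ[T;T⁻¹]) := by rw [neg_mul, ← T_add, neg_add_cancel, T_zero]
  have hS₁ : character n hq (symmetrizer (1 : ℤ[T;T⁻¹]) (gen n) n) ≠ 0 :=
    character_symmetrizer_ne_zero hq (by simp)
  have hS₂ : character n hs (symmetrizer (-T (-1)) (gen n) n) ≠ 0 :=
    character_symmetrizer_ne_zero hs (by simp)
  have hint₁ := exists_character_basis_eq_C hq (one_mul _) (by ring) b hb hS₁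
  have hint₂ := exists_character_basis_eq_C hs hqs (by ring) b hb hS₂
  have heq : ∀ i, character n hq (b i) = character n hs (b i) := fun i => by
    obtain ⟨z₁, h₁⟩ := hint₁ i
    obtain ⟨z₂, h₂⟩ := hint₂ i
    have := map_character_eq hq (eval₂ (RingHom.id ℤ) (-1)) hs (by simp) (b i : HeckeAlgebra n)
    rw [h₁, h₂, eval₂_C, eval₂_C, RingHom.id_apply, RingHom.id_apply] at this
    rw [h₁, h₂, this]
  have := LinearMap.congr_fun
    (b.ext (f₁ := ((character n hq).comp (Subalgebra.center _ _).val).toLinearMap)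
      (f₂ := ((character n hs).comp (Subalgebra.center _ _).val).toLinearMap) heq)
    ⟨symmetrizer (1 : ℤ[T;T⁻¹]) (gen n) n, symmetrizer_mem_center (one_mul _) (by ring)⟩
  exact hS₁ (this.trans (character_symmetrizer_eq_zero hs (by omega) (by ring)))
end

section
/- Let e₁, …, e_t be elements of the centre of ℚSₙ that are idempotent (e_i² = e_i), pairwise orthogonal (e_i e_j = 0 for i ≠ j), and form a ℚ-basis of the centre of ℚSₙ. Let B be a multiplicative ℤ-basis of the centre of ℤSₙ and let b ∈ B. Then, viewing b as an element of ℚSₙ via the canonical inclusion ℤSₙ → ℚSₙ, there exist ε₁, …, ε_t ∈ {−1, 0, 1} such that b = Σᵢ εᵢ eᵢ. -/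
/-- The canonical ring embedding `ℤSₙ → ℚSₙ` induced by `ℤ → ℚ`. -/
noncomputable def intToRatGroupAlgebra (n : ℕ) :
    MonoidAlgebra ℤ (Equiv.Perm (Fin n)) →+* MonoidAlgebra ℚ (Equiv.Perm (Fin n)) :=
  MonoidAlgebra.liftNCRingHom
    ((algebraMap ℚ (MonoidAlgebra ℚ (Equiv.Perm (Fin n)))).comp (Int.castRingHom ℚ))
    (MonoidAlgebra.of ℚ (Equiv.Perm (Fin n)))
    (fun x _ => (Algebra.commutes ((x : ℚ)) _))

/-! Since `b` is central, `b = Σ cᵢ eᵢ` in `ℚSₙ`, and then `bᵏ = Σ cᵢᵏ eᵢ` for `k ≥ 1`.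
As `B` is finite and closed under multiplication, two distinct powers of `b` coincide, so by
linear independence `cᵢᵐ⁺¹ = cᵢᵐ'⁺¹` with `m ≠ m'`, which forces `cᵢ ∈ {-1, 0, 1}`. -/

theorem MonoidAlgebra.map_mem_center {R k G : Type*} [CommSemiring R] [CommSemiring k] [Monoid G]
    (φ : MonoidAlgebra R G →+* MonoidAlgebra k G) (hφ : ∀ g, φ (of R G g) = of k G g)
    {x : MonoidAlgebra R G} (hx : x ∈ Subalgebra.center R (MonoidAlgebra R G)) :
    φ x ∈ Subalgebra.center k (MonoidAlgebra k G) := by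
  rw [Subalgebra.mem_center_iff] at hx ⊢
  intro y
  induction y using MonoidAlgebra.induction_on with
  | of g => rw [← hφ, ← map_mul, ← map_mul, hx]
  | add y z hy hz => rw [add_mul, mul_add, hy, hz]
  | smul r y hy => rw [smul_mul_assoc, mul_smul_comm, hy]

theorem intToRatGroupAlgebra_of (n : ℕ) (σ : Equiv.Perm (Fin n)) :
    intToRatGroupAlgebra n (MonoidAlgebra.of ℤ _ σ) = MonoidAlgebra.of ℚ _ σ := by
  simp [intToRatGroupAlgebra, MonoidAlgebra.liftNCRingHom, MonoidAlgebra.of_apply,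
    MonoidAlgebra.liftNC_single]

theorem OrthogonalIdempotents.sum_smul_mul_sum_smul {R A ι : Type*} [CommSemiring R] [Semiring A]
    [Algebra R A] [Fintype ι] {e : ι → A} (he : OrthogonalIdempotents e) (c d : ι → R) :
    (∑ i, c i • e i) * ∑ i, d i • e i = ∑ i, (c i * d i) • e i := by
  classical
  simp [Finset.sum_mul, Finset.mul_sum, he.mul_eq, smul_smul, mul_comm]

theorem OrthogonalIdempotents.sum_smul_pow_succ {R A ι : Type*} [CommSemiring R] [Semiring A]
    [Algebra R A] [Fintype ι] {e : ι → A} (he : OrthogonalIdempotents e) (c : ι → R) (m : ℕ) :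
    (∑ i, c i • e i) ^ (m + 1) = ∑ i, c i ^ (m + 1) • e i := by
  induction m with
  | zero => simp
  | succ m ih =>
    rw [pow_succ, ih, he.sum_smul_mul_sum_smul]
    simp_rw [← pow_succ]

theorem exists_pow_succ_eq_of_forall_mul_eq {M ι : Type*} [Monoid M] (b : ι → M)
    (hmult : ∀ i j, ∃ k, b i * b j = b k) (i : ι) (m : ℕ) : ∃ j, b i ^ (m + 1) = b j := by
  induction m with
  | zero => exact ⟨i, pow_one _⟩
  | succ m ih =>
    obtain ⟨j, hj⟩ := ih
    obtain ⟨k, hk⟩ := hmult j i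
    exact ⟨k, by rw [pow_succ, hj, hk]⟩

theorem exists_ne_pow_succ_eq_pow_succ {M ι : Type*} [Monoid M] [Finite ι] (b : ι → M)
    (hmult : ∀ i j, ∃ k, b i * b j = b k) (i : ι) :
    ∃ m m', m ≠ m' ∧ b i ^ (m + 1) = b i ^ (m' + 1) := by
  choose p hp using exists_pow_succ_eq_of_forall_mul_eq b hmult i
  obtain ⟨m, m', hne, hpp⟩ := Finite.exists_ne_map_eq_of_infinite p
  exact ⟨m, m', hne, by rw [hp, hp, hpp]⟩

theorem eq_neg_one_or_eq_zero_or_eq_one_of_pow_succ_eq {R : Type*} [Ring R] [LinearOrder R]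
    [IsStrictOrderedRing R] {x : R} {a b : ℕ} (hab : a ≠ b) (h : x ^ (a + 1) = x ^ (b + 1)) :
    x = -1 ∨ x = 0 ∨ x = 1 := by
  wlog hlt : a < b generalizing a b
  · exact this hab.symm h.symm (hab.lt_or_gt.resolve_left hlt)
  rcases eq_or_ne x 0 with hx | hx
  · exact Or.inr (Or.inl hx)
  have hone : x ^ (b - a) = 1 := by
    refine mul_left_cancel₀ (pow_ne_zero (a + 1) hx) ?_
    rw [mul_one, ← pow_add, h]
    congr 1
    omega
  rcases (pow_eq_one_iff_of_ne_zero (Nat.sub_ne_zero_of_lt hlt)).mp hone with h1 | ⟨hm1, -⟩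
  exacts [Or.inr (Or.inr h1), Or.inl hm1]

theorem exists_intCast_eq_of_eq_neg_one_or_eq_zero_or_eq_one {R : Type*} [Ring R] {x : R}
    (hx : x = -1 ∨ x = 0 ∨ x = 1) : ∃ k : ℤ, (k = -1 ∨ k = 0 ∨ k = 1) ∧ (k : R) = x := by
  rcases hx with rfl | rfl | rfl
  exacts [⟨-1, by simp⟩, ⟨0, by simp⟩, ⟨1, by simp⟩]

theorem multiplicative_basis_elt_eq_signed_sum_idempotents_general (n t : ℕ)
    (e : Fin t → MonoidAlgebra ℚ (Equiv.Perm (Fin n)))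
    (hidem : ∀ i, e i * e i = e i)
    (horth : ∀ i j, i ≠ j → e i * e j = 0)
    (hindep : LinearIndependent ℚ e)
    (hspan : Submodule.span ℚ (Set.range e)
      = Subalgebra.toSubmodule
          (Subalgebra.center ℚ (MonoidAlgebra ℚ (Equiv.Perm (Fin n)))))
    {ι : Type}
    (b : Module.Basis ι ℤ (Subalgebra.center ℤ (MonoidAlgebra ℤ (Equiv.Perm (Fin n)))))
    (hmult : ∀ i j : ι, ∃ k : ι, b i * b j = b k) (i₀ : ι) :
    ∃ ε : Fin t → ℤ, (∀ i, ε i = -1 ∨ ε i = 0 ∨ ε i = 1) ∧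
      intToRatGroupAlgebra n ((b i₀ : MonoidAlgebra ℤ (Equiv.Perm (Fin n))))
        = ∑ i : Fin t, (ε i : ℚ) • e i := by
  have he : OrthogonalIdempotents e := ⟨hidem, horth⟩
  have hmem : intToRatGroupAlgebra n (b i₀) ∈ Submodule.span ℚ (Set.range e) :=
    hspan ▸ MonoidAlgebra.map_mem_center _ (intToRatGroupAlgebra_of n) (b i₀).2
  obtain ⟨c, hc⟩ := (Submodule.mem_span_range_iff_exists_fun ℚ).mp hmem
  have : Module.Finite ℤ (Subalgebra.center ℤ (MonoidAlgebra ℤ (Equiv.Perm (Fin n)))) :=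
    .of_injective (Subalgebra.val _).toLinearMap Subtype.val_injective
  have : Finite ι := Module.Finite.finite_basis b
  obtain ⟨m, m', hne, hpow⟩ := exists_ne_pow_succ_eq_pow_succ b hmult i₀
  have hcoef : ∀ i, c i ^ (m + 1) = c i ^ (m' + 1) := by
    refine Fintype.linearIndependent_iffₛ.mp hindep _ _ ?_
    rw [← he.sum_smul_pow_succ, ← he.sum_smul_pow_succ, hc, ← map_pow, ← map_pow,
      ← Subalgebra.coe_pow, ← Subalgebra.coe_pow, hpow]
  choose ε hε hεc using fun i => exists_intCast_eq_of_eq_neg_one_or_eq_zero_or_eq_one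
    (eq_neg_one_or_eq_zero_or_eq_one_of_pow_succ_eq hne (hcoef i))
  exact ⟨ε, hε, by simp only [hεc, hc]⟩

/-- If `e₁, …, e_t` are pairwise orthogonal central idempotents of `ℚSₙ` forming
a `ℚ`-basis of the centre of `ℚSₙ`, `B` is a multiplicative `ℤ`-basis of the
centre of `ℤSₙ` and `b ∈ B`, then in `ℚSₙ` one has `b = Σᵢ εᵢ eᵢ` with each
`εᵢ ∈ {-1, 0, 1}`. -/
theorem multiplicative_basis_elt_eq_signed_sum_idempotents (n t : ℕ)
    (e : Fin t → MonoidAlgebra ℚ (Equiv.Perm (Fin n)))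
    (hcentral : ∀ i, e i ∈ Subalgebra.center ℚ (MonoidAlgebra ℚ (Equiv.Perm (Fin n))))
    (hidem : ∀ i, e i * e i = e i)
    (horth : ∀ i j, i ≠ j → e i * e j = 0)
    (hindep : LinearIndependent ℚ e)
    (hspan : Submodule.span ℚ (Set.range e)
      = Subalgebra.toSubmodule
          (Subalgebra.center ℚ (MonoidAlgebra ℚ (Equiv.Perm (Fin n)))))
    {ι : Type}
    (b : Module.Basis ι ℤ (Subalgebra.center ℤ (MonoidAlgebra ℤ (Equiv.Perm (Fin n)))))
    (hmult : ∀ i j : ι, ∃ k : ι, b i * b j = b k) (i₀ : ι) :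
    ∃ ε : Fin t → ℤ, (∀ i, ε i = -1 ∨ ε i = 0 ∨ ε i = 1) ∧
      intToRatGroupAlgebra n ((b i₀ : MonoidAlgebra ℤ (Equiv.Perm (Fin n))))
        = ∑ i : Fin t, (ε i : ℚ) • e i :=
  multiplicative_basis_elt_eq_signed_sum_idempotents_general n t e hidem horth hindep hspan b hmult
    i₀
end

section
/- A ℤ-basis B of the group algebra ℤS₂ (which is commutative, hence equals its own centre) is multiplicative if and only if the set of basis elements equals {1, σ} or {1, −σ}, where σ denotes the image in ℤS₂ of the unique nontrivial permutation of a two-element set. In particular, there exist exactly two multiplicative bases for Z(ℤS₂). -/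
/-!
The augmentation and the sign character map a multiplicative basis `B` of `ℤS₂` into a finite
multiplicatively closed subset of `ℤ`, whose elements must lie in `{0, ±1}`. An element `a + cσ`
has character values `a + c` and `a - c`, so a nonzero element with both values in `{0, ±1}` is
one of `±1, ±σ`. These all square to `1`, hence `1 ∈ B`; since `B` has two elements and `-1` is
linearly dependent on `1`, the other one is `σ` or `-σ`.
-/

open Module

local notation "ℤS₂" => MonoidAlgebra ℤ (Equiv.Perm (Fin 2))
local notation "σ" => MonoidAlgebra.of ℤ (Equiv.Perm (Fin 2)) (Equiv.swap 0 1)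

theorem pow_succ_mem_of_mul_mem {M : Type*} [Monoid M] {S : Set M}
    (hS : ∀ x ∈ S, ∀ y ∈ S, x * y ∈ S) {x : M} (hx : x ∈ S) (n : ℕ) : x ^ (n + 1) ∈ S := by
  induction n with
  | zero => simpa
  | succ n ih => rw [pow_succ]; exact hS _ ih _ hx

theorem Set.Finite.exists_ne_pow_succ_eq {M : Type*} [Monoid M] {S : Set M} (hfin : S.Finite)
    (hS : ∀ x ∈ S, ∀ y ∈ S, x * y ∈ S) {x : M} (hx : x ∈ S) :
    ∃ m n : ℕ, m ≠ n ∧ x ^ (m + 1) = x ^ (n + 1) := by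
  by_contra! h
  exact hfin.not_infinite <| Set.infinite_of_injective_forall_mem
    (fun m n hmn ↦ by_contra fun hne ↦ h m n hne hmn) (pow_succ_mem_of_mul_mem hS hx)

theorem Int.natAbs_le_one_of_pow_eq_pow {t : ℤ} {m n : ℕ} (hmn : m ≠ n) (h : t ^ m = t ^ n) :
    t.natAbs ≤ 1 := by
  by_contra! ht
  exact hmn (Int.pow_right_injective ht h)

theorem Set.Finite.natAbs_map_le_one {M F : Type*} [Monoid M] [FunLike F M ℤ]
    [MonoidHomClass F M ℤ] (χ : F) {S : Set M} (hfin : S.Finite) (hS : ∀ x ∈ S, ∀ y ∈ S, x * y ∈ S) {x : M} (hx : x ∈ S) :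
    (χ x).natAbs ≤ 1 := by
  obtain ⟨m, n, hmn, h⟩ := hfin.exists_ne_pow_succ_eq hS hx
  exact Int.natAbs_le_one_of_pow_eq_pow (by omega : m + 1 ≠ n + 1)
    (by rw [← map_pow, ← map_pow, h])

theorem Module.Basis.ne_neg {ι R M : Type*} [Ring R] [Nontrivial R] [AddCommGroup M] [Module R M]
    (b : Basis ι R M) {i j : ι} (hij : i ≠ j) : b i ≠ -b j := fun h ↦ by
  simpa [Finsupp.single_apply, hij.symm] using DFunLike.congr_fun (congrArg b.repr h) i

theorem Module.Basis.exists_mul_eq_of_range_eq_pair {ι R A : Type*} [Semiring R] [Semiring A]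
    [Module R A] (b : Basis ι R A) {s : A} (hs : s * s = 1) (h : Set.range b = {1, s}) (i j : ι) :
    ∃ k, b i * b j = b k := by
  have hi : b i ∈ ({1, s} : Set A) := h ▸ ⟨i, rfl⟩
  have hj : b j ∈ ({1, s} : Set A) := h ▸ ⟨j, rfl⟩
  simp only [Set.mem_insert_iff, Set.mem_singleton_iff] at hi hj
  obtain ⟨k, hk⟩ : b i * b j ∈ Set.range b := by
    rw [h]
    rcases hi with hi | hi <;> rcases hj with hj | hj <;> simp [hi, hj, hs]
  exact ⟨k, hk.symm⟩

namespace MonoidAlgebra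

noncomputable def augmentation (G : Type*) [Monoid G] : MonoidAlgebra ℤ G →ₐ[ℤ] ℤ :=
  lift ℤ ℤ G 1

@[simp]
theorem augmentation_of {G : Type*} [Monoid G] (g : G) : augmentation G (of ℤ G g) = 1 := by
  simp [augmentation]

noncomputable def signChar (α : Type*) [DecidableEq α] [Fintype α] :
    MonoidAlgebra ℤ (Equiv.Perm α) →ₐ[ℤ] ℤ :=
  lift ℤ ℤ _ ((Units.coeHom ℤ).comp Equiv.Perm.sign)

@[simp]
theorem signChar_of {α : Type*} [DecidableEq α] [Fintype α] (g : Equiv.Perm α) :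
    signChar α (of ℤ _ g) = Equiv.Perm.sign g := by
  simp [signChar]

end MonoidAlgebra

open MonoidAlgebra

theorem of_swap_mul_self : σ * σ = 1 := by
  rw [← map_mul, Equiv.swap_mul_self, map_one]

theorem exists_eq_smul_one_add_smul_swap (x : ℤS₂) : ∃ a c : ℤ, x = a • 1 + c • σ := by
  induction x using MonoidAlgebra.induction_on with
  | of g =>
    rcases (by decide +revert : g = 1 ∨ g = Equiv.swap 0 1) with rfl | rfl
    · exact ⟨1, 0, by simp [one_def]⟩
    · exact ⟨0, 1, by simp⟩
  | add x y hx hy =>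
    obtain ⟨a, c, rfl⟩ := hx
    obtain ⟨a', c', rfl⟩ := hy
    exact ⟨a + a', c + c', by module⟩
  | smul r x hx =>
    obtain ⟨a, c, rfl⟩ := hx
    exact ⟨r * a, r * c, by module⟩

def trivialUnits : Set ℤS₂ := {1, -1, σ, -σ}

theorem mul_self_eq_one_of_mem_trivialUnits {x : ℤS₂} (hx : x ∈ trivialUnits) : x * x = 1 := by
  rcases hx with rfl | rfl | rfl | rfl <;>
    simp only [neg_mul_neg, mul_one, of_swap_mul_self]

theorem mem_trivialUnits_of_natAbs_le_one {x : ℤS₂} (hx : x ≠ 0)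
    (haug : (augmentation _ x).natAbs ≤ 1) (hsign : (signChar _ x).natAbs ≤ 1) :
    x ∈ trivialUnits := by
  obtain ⟨a, c, rfl⟩ := exists_eq_smul_one_add_smul_swap x
  simp only [map_add, map_smul, map_one, augmentation_of, signChar_of, smul_eq_mul,
    Equiv.Perm.sign_swap (by decide : (0 : Fin 2) ≠ 1), Units.val_neg, Units.val_one, mul_one,
    mul_neg] at haug hsign
  have : a = 0 ∧ c = 0 ∨ a = 1 ∧ c = 0 ∨ a = -1 ∧ c = 0 ∨ a = 0 ∧ c = 1 ∨ a = 0 ∧ c = -1 := by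
    omega
  rcases this with ⟨rfl, rfl⟩ | ⟨rfl, rfl⟩ | ⟨rfl, rfl⟩ | ⟨rfl, rfl⟩ | ⟨rfl, rfl⟩
  · simp at hx
  all_goals
    simp only [trivialUnits, Set.mem_insert_iff, Set.mem_singleton_iff, one_smul, zero_smul,
      neg_smul, add_zero, zero_add]
    tauto

theorem Module.Basis.nat_card_index_eq_two {ι : Type*} (b : Basis ι ℤ ℤS₂) : Nat.card ι = 2 := by
  rw [Nat.card_congr (b.indexEquiv (MonoidAlgebra.basis _ ℤ))]
  simp [Fintype.card_perm]

theorem Module.Basis.apply_mem_trivialUnits {ι : Type*} [Finite ι] (b : Basis ι ℤ ℤS₂)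
    (hmul : ∀ i j, ∃ k, b i * b j = b k) (i : ι) : b i ∈ trivialUnits := by
  have hclosed : ∀ x ∈ Set.range b, ∀ y ∈ Set.range b, x * y ∈ Set.range b := by
    rintro _ ⟨i, rfl⟩ _ ⟨j, rfl⟩
    exact (hmul i j).imp fun _ hk ↦ hk.symm
  exact mem_trivialUnits_of_natAbs_le_one (b.ne_zero i)
    ((Set.finite_range b).natAbs_map_le_one (augmentation _) hclosed ⟨i, rfl⟩)
    ((Set.finite_range b).natAbs_map_le_one (signChar _) hclosed ⟨i, rfl⟩)

/-- A `ℤ`-basis of the group algebra `ℤS₂` (which is commutative, hence equal to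
its own centre) is multiplicative if and only if its set of elements is
`{1, σ}` or `{1, -σ}`, where `σ` is the image in `ℤS₂` of the nontrivial
permutation.  In particular there are exactly two multiplicative bases. -/
theorem multiplicative_basis_int_group_algebra_S2_iff {ι : Type}
    (b : Module.Basis ι ℤ (MonoidAlgebra ℤ (Equiv.Perm (Fin 2)))) :
    (∀ i j : ι, ∃ k : ι, b i * b j = b k) ↔
      (Set.range b = {1, MonoidAlgebra.of ℤ (Equiv.Perm (Fin 2)) (Equiv.swap 0 1)} ∨
       Set.range b = {1, -MonoidAlgebra.of ℤ (Equiv.Perm (Fin 2)) (Equiv.swap 0 1)}) := by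
  have hcard := b.nat_card_index_eq_two
  have : Finite ι := Nat.finite_of_card_ne_zero (by omega)
  constructor
  · intro hmul
    have htriv := b.apply_mem_trivialUnits hmul
    obtain ⟨i⟩ : Nonempty ι := Nat.card_pos_iff.mp (by omega) |>.1
    obtain ⟨k, hk⟩ := hmul i i
    rw [mul_self_eq_one_of_mem_trivialUnits (htriv i), eq_comm] at hk
    obtain ⟨j, hjk, hj⟩ := (Nat.card_eq_two_iff' k).mp hcard
    have huniv : (Set.univ : Set ι) = {k, j} :=
      (Set.eq_univ_of_forall fun l ↦ (em (l = k)).imp id (hj l)).symm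
    rw [← Set.image_univ, huniv, Set.image_pair, hk]
    rcases htriv j with h | h | h | h
    · exact absurd (b.injective (h.trans hk.symm)) hjk
    · exact absurd (h.trans (congrArg Neg.neg hk.symm)) (b.ne_neg hjk)
    · exact .inl (by rw [h])
    · exact .inr (by rw [h])
  · rintro (h | h)
    · exact b.exists_mul_eq_of_range_eq_pair of_swap_mul_self h
    · exact b.exists_mul_eq_of_range_eq_pair (by rw [neg_mul_neg, of_swap_mul_self]) h
end

section
/- Let R = ℤ[q,q⁻¹] and let 𝓗₂ = R[T]/(T² − (q−1)T − q) be the Iwahori–Hecke algebra of S₂, realized for instance as AdjoinRoot of the polynomial X² − C(q−1)·X − C(q) over R. Then there does not exist a multiplicative R-basis of 𝓗₂ (which is commutative, hence equals its own centre); i.e., there is no R-module basis B of 𝓗₂ such that for every b, b′ ∈ B there exists b″ ∈ B with b·b′ = b″. -/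
/-!
Specialize `q ↦ 2`. The two characters of `𝓗₂`, sending `T` to `q` and to `-1`, become ring
homomorphisms `ψ₊, ψ₋ : 𝓗₂ → ℚ`. In a multiplicative basis the powers of each basis vector repeat,
so `ψ±` take values in `{0, 1, -1}` on it. On the other hand `ψ₊ z - ψ₋ z` is `3` times a dyadic
rational for every `z`, because the two characters agree modulo `q + 1`. Hence `ψ₊ = ψ₋` on the
basis, so everywhere, contradicting `ψ₊ T = 2 ≠ -1 = ψ₋ T`.
-/

open Polynomial LaurentPolynomial

/-- The Iwahori–Hecke algebra `𝓗₂ = R[T]/(T² - (q-1)T - q)` of `S₂` over the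
Laurent polynomial ring `R = ℤ[q,q⁻¹]`. -/
noncomputable abbrev HeckeS2 : Type :=
  AdjoinRoot (X ^ 2 - Polynomial.C (T 1 - 1) * X - Polynomial.C (T 1) :
    Polynomial (LaurentPolynomial ℤ))

theorem not_injective_pow_of_mul_mem_range {ι M : Type*} [Finite ι] [Monoid M] (b : ι → M)
    (hb : ∀ i j, ∃ k, b i * b j = b k) (i : ι) : ¬ Function.Injective (b i ^ · : ℕ → M) := by
  have hmem : ∀ n : ℕ, b i ^ (n + 1) ∈ Set.range b := by
    intro n
    induction n with
    | zero => exact ⟨i, (pow_one _).symm⟩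
    | succ n ih =>
      obtain ⟨j, hj⟩ := ih
      obtain ⟨k, hk⟩ := hb i j
      exact ⟨k, by rw [pow_succ', ← hj, hk]⟩
  intro hinj
  exact Set.infinite_of_injective_forall_mem (hinj.comp (add_left_injective 1)) hmem
    (Set.finite_range b)

theorem eq_zero_or_eq_one_or_eq_neg_one_of_not_injective_pow {R : Type*} [Ring R] [LinearOrder R]
    [IsStrictOrderedRing R] {x : R} (hx : ¬ Function.Injective (x ^ · : ℕ → R)) :
    x = 0 ∨ x = 1 ∨ x = -1 := by
  contrapose! hx
  obtain ⟨hx₀, hx₁, hx₂⟩ := hx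
  have habs : |x| ≠ 1 := fun h => (abs_eq zero_le_one).mp h |>.elim hx₁ hx₂
  intro m n hmn
  exact pow_right_injective₀ (abs_pos.mpr hx₀) habs (by simpa only [pow_abs] using congrArg abs hmn)

theorem AdjoinRoot.sub_dvd_lift_sub_lift {R S : Type*} [CommRing R] [CommRing S] {f : R[X]}
    {i : R →+* S} {a b : S} (ha : f.eval₂ i a = 0) (hb : f.eval₂ i b = 0) (z : AdjoinRoot f) :
    a - b ∣ lift i a ha z - lift i b hb z := by
  induction z using AdjoinRoot.induction_on with
  | ih p => simpa only [lift_mk, eval₂_eq_eval_map] using sub_dvd_eval_sub a b (p.map i)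

theorem Int.eq_of_sub_mul_two_pow_eq_three_mul {k l m : ℤ} {n : ℕ} (hk : |k| ≤ 1) (hl : |l| ≤ 1)
    (h : (k - l) * 2 ^ n = 3 * m) : k = l := by
  have h3 : Prime (3 : ℤ) := by norm_num
  rcases h3.dvd_or_dvd ⟨m, h⟩ with hkl | h2
  · rw [abs_le] at hk hl
    omega
  · exact absurd (h3.dvd_of_dvd_pow h2) (by norm_num)

theorem Rat.eq_of_sub_mul_two_pow_eq_three_mul {x y : ℚ} (hx : x = 0 ∨ x = 1 ∨ x = -1)
    (hy : y = 0 ∨ y = 1 ∨ y = -1) {n : ℕ} {m : ℤ} (h : (x - y) * 2 ^ n = 3 * m) : x = y := by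
  have hint : ∀ x : ℚ, x = 0 ∨ x = 1 ∨ x = -1 → ∃ k : ℤ, |k| ≤ 1 ∧ (k : ℚ) = x := by
    rintro x (rfl | rfl | rfl)
    exacts [⟨0, by norm_num⟩, ⟨1, by norm_num⟩, ⟨-1, by norm_num⟩]
  obtain ⟨k, hk, rfl⟩ := hint x hx
  obtain ⟨l, hl, rfl⟩ := hint y hy
  exact congrArg _ (Int.eq_of_sub_mul_two_pow_eq_three_mul hk hl (by exact_mod_cast h))

namespace HeckeS2

theorem monic_relation :
    (X ^ 2 - Polynomial.C (T 1 - 1) * X - Polynomial.C (T 1) : (LaurentPolynomial ℤ)[X]).Monic := by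
  rw [sub_sub]
  exact monic_X_pow_sub (degree_linear_le.trans_lt (by decide))

instance : Module.Finite (LaurentPolynomial ℤ) HeckeS2 := monic_relation.finite_adjoinRoot

theorem isRoot_relation_T_one :
    (X ^ 2 - Polynomial.C (T 1 - 1) * X - Polynomial.C (T 1) : (LaurentPolynomial ℤ)[X]).IsRoot
      (T 1) := by
  simp only [IsRoot, eval_sub, eval_mul, eval_pow, eval_X, eval_C]
  ring

theorem isRoot_relation_neg_one :
    (X ^ 2 - Polynomial.C (T 1 - 1) * X - Polynomial.C (T 1) : (LaurentPolynomial ℤ)[X]).IsRoot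
      (-1) := by
  simp

noncomputable def indChar : HeckeS2 →ₐ[LaurentPolynomial ℤ] LaurentPolynomial ℤ :=
  AdjoinRoot.liftAlgHom _ (Algebra.ofId _ _) (T 1) isRoot_relation_T_one

noncomputable def sgnChar : HeckeS2 →ₐ[LaurentPolynomial ℤ] LaurentPolynomial ℤ :=
  AdjoinRoot.liftAlgHom _ (Algebra.ofId _ _) (-1) isRoot_relation_neg_one

theorem dvd_indChar_sub_sgnChar (z : HeckeS2) : T 1 + 1 ∣ indChar z - sgnChar z := by
  rw [← sub_neg_eq_add]
  exact AdjoinRoot.sub_dvd_lift_sub_lift isRoot_relation_T_one isRoot_relation_neg_one z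

noncomputable def evalTwo : LaurentPolynomial ℤ →+* ℚ :=
  LaurentPolynomial.eval₂ (Int.castRingHom ℚ) (Units.mk0 2 two_ne_zero)

theorem exists_evalTwo_mul_two_pow_eq_intCast (c : LaurentPolynomial ℤ) :
    ∃ (n : ℕ) (m : ℤ), evalTwo c * 2 ^ n = m := by
  obtain ⟨n, p, hp⟩ := exists_T_pow c
  refine ⟨n, p.eval 2, ?_⟩
  simpa [evalTwo, eval₂_eq_eval_map] using (congrArg evalTwo hp).symm

theorem exists_evalTwo_indChar_sub_evalTwo_sgnChar (z : HeckeS2) :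
    ∃ (n : ℕ) (m : ℤ), (evalTwo (indChar z) - evalTwo (sgnChar z)) * 2 ^ n = 3 * m := by
  obtain ⟨c, hc⟩ := dvd_indChar_sub_sgnChar z
  obtain ⟨n, m, hm⟩ := exists_evalTwo_mul_two_pow_eq_intCast c
  refine ⟨n, m, ?_⟩
  have h3 : evalTwo (T 1 + 1) = 3 := by norm_num [evalTwo]
  rw [← map_sub, hc, map_mul, h3, mul_assoc, hm]

end HeckeS2

open HeckeS2 in
/-- There is no multiplicative `R`-basis of the Iwahori–Hecke algebra `𝓗₂` of
`S₂` over `R = ℤ[q,q⁻¹]` (which is commutative, hence equal to its centre). -/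
theorem no_multiplicative_basis_heckeS2 :
    ¬ ∃ (ι : Type) (b : Module.Basis ι (LaurentPolynomial ℤ) HeckeS2),
      ∀ i j : ι, ∃ k : ι, b i * b j = b k := by
  rintro ⟨ι, b, hb⟩
  have : Finite ι := Module.Finite.finite_basis b
  have hval (ψ : HeckeS2 →+* ℚ) (i : ι) : ψ (b i) = 0 ∨ ψ (b i) = 1 ∨ ψ (b i) = -1 :=
    eq_zero_or_eq_one_or_eq_neg_one_of_not_injective_pow fun hinj =>
      not_injective_pow_of_mul_mem_range b hb i fun m n hmn =>
        hinj (by simp only [← map_pow, hmn])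
  have hagree (i : ι) : evalTwo (indChar (b i)) = evalTwo (sgnChar (b i)) := by
    obtain ⟨n, m, h⟩ := exists_evalTwo_indChar_sub_evalTwo_sgnChar (b i)
    exact Rat.eq_of_sub_mul_two_pow_eq_three_mul (hval (evalTwo.comp indChar) i)
      (hval (evalTwo.comp sgnChar) i) h
  have hext := b.ext (f₁ := evalTwo.toSemilinearMap ∘ₛₗ indChar.toLinearMap)
    (f₂ := evalTwo.toSemilinearMap ∘ₛₗ sgnChar.toLinearMap) hagree
  have hroot := congr($hext (AdjoinRoot.root _))
  norm_num [indChar, sgnChar, evalTwo] at hroot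
end

section
/- Let B be a multiplicative ℤ-basis of the centre Z(ℤSₙ) of the integral group algebra of Sₙ. Then every element b ∈ B satisfies b³ = b. -/
/-!
Since the basis is finite and closed under multiplication, the powers of `b` repeat:
`b ^ m = b ^ n` for some `m < n`. A central element of `ℤSₙ` takes the same coefficient on `g`
and `g⁻¹`, which are conjugate, so its left-regular matrix is real symmetric. The eigenvalues `t`
of that matrix are real with `t ^ m = t ^ n`, hence lie in `{-1, 0, 1}`, so the matrix, and with
it `b`, is its own cube.
-/

theorem pow_three_eq_self_of_pow_eq_pow {R : Type*} [Ring R] [LinearOrder R]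
    [IsStrictOrderedRing R] {t : R} {m n : ℕ} (hmn : m < n) (h : t ^ m = t ^ n) : t ^ 3 = t := by
  rcases eq_or_ne t 0 with rfl | ht
  · simp
  have hpow : t ^ (n - m) = 1 := by
    refine mul_left_cancel₀ (pow_ne_zero m ht) ?_
    rw [← pow_add, Nat.add_sub_cancel' hmn.le, mul_one, h]
  rcases (pow_eq_one_iff_of_ne_zero (Nat.sub_ne_zero_of_lt hmn)).mp hpow with rfl | ⟨rfl, -⟩ <;>
    norm_num

theorem IsSelfAdjoint.pow_three_eq_self_of_pow_eq_pow {A : Type*} [Ring A] [StarRing A]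
    [Algebra ℝ A] [TopologicalSpace A] [ContinuousFunctionalCalculus ℝ A IsSelfAdjoint]
    {a : A} (ha : IsSelfAdjoint a) {m n : ℕ} (hmn : m < n) (h : a ^ m = a ^ n) : a ^ 3 = a := by
  have hspec : (spectrum ℝ a).EqOn (· ^ m) (· ^ n) :=
    eqOn_of_cfc_eq_cfc (by rwa [cfc_pow_id a m, cfc_pow_id a n])
  calc a ^ 3 = cfc (· ^ 3 : ℝ → ℝ) a := (cfc_pow_id a 3).symm
    _ = cfc id a := cfc_congr fun t ht ↦ _root_.pow_three_eq_self_of_pow_eq_pow hmn (hspec ht)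
    _ = a := cfc_id ℝ a

theorem exists_lt_pow_eq_pow_of_mul_mem_range {M ι : Type*} [Monoid M] [Finite ι]
    (f : ι → M) (i : ι) (hmul : ∀ j, ∃ k, f i * f j = f k) :
    ∃ m n : ℕ, m < n ∧ f i ^ m = f i ^ n := by
  have hmem : ∀ k : ℕ, f i ^ (k + 1) ∈ Set.range f := by
    intro k
    induction k with
    | zero => exact ⟨i, (pow_one _).symm⟩
    | succ k ih =>
      obtain ⟨j, hj⟩ := ih
      obtain ⟨l, hl⟩ := hmul j
      exact ⟨l, by rw [pow_succ', ← hj, hl]⟩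
  obtain ⟨m, n, hmn, h⟩ := (Set.finite_range f).exists_lt_map_eq_of_forall_mem hmem
  exact ⟨m + 1, n + 1, Nat.succ_lt_succ hmn, h⟩

namespace MonoidAlgebra

variable {G : Type*} [Group G]

theorem coeff_conj_of_mem_center {R : Type*} [Semiring R] {x : R[G]} (hx : x ∈ Set.center R[G])
    (g h : G) : x.coeff (g * h * g⁻¹) = x.coeff h := by
  have := congr(($((Set.mem_center_iff.mp hx).comm (single g 1))).coeff (g * h))
  simpa [mul_assoc] using this

theorem coeff_inv_of_mem_center {R α : Type*} [Semiring R] [Fintype α] [DecidableEq α]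
    {x : R[Equiv.Perm α]} (hx : x ∈ Set.center R[Equiv.Perm α]) (g : Equiv.Perm α) :
    x.coeff g⁻¹ = x.coeff g := by
  obtain ⟨c, hc⟩ := isConj_iff.mp <|
    Equiv.Perm.isConj_iff_cycleType_eq.mpr (Equiv.Perm.cycleType_inv g).symm
  rw [← hc, coeff_conj_of_mem_center hx]

variable [Fintype G] [DecidableEq G]

noncomputable def regularMatrix : ℤ[G] →+* Matrix G G ℝ :=
  (Int.castRingHom ℝ).mapMatrix.comp (Algebra.leftMulMatrix (basis G ℤ)).toRingHom

theorem regularMatrix_apply (x : ℤ[G]) (g h : G) :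
    regularMatrix x g h = x.coeff (g * h⁻¹) := by
  simp [regularMatrix, Algebra.leftMulMatrix_eq_repr_mul, basis]

theorem regularMatrix_injective :
    Function.Injective (regularMatrix : ℤ[G] →+* Matrix G G ℝ) :=
  (Matrix.map_injective Int.cast_injective).comp (Algebra.leftMulMatrix_injective _)

theorem isHermitian_regularMatrix {x : ℤ[G]} (hx : ∀ g, x.coeff g⁻¹ = x.coeff g) :
    (regularMatrix x).IsHermitian := by
  ext g h
  simp [regularMatrix_apply, ← hx (h * g⁻¹)]

theorem pow_three_eq_self_of_pow_eq_pow {x : ℤ[G]} (hx : ∀ g, x.coeff g⁻¹ = x.coeff g)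
    {m n : ℕ} (hmn : m < n) (h : x ^ m = x ^ n) : x ^ 3 = x :=
  regularMatrix_injective <| by
    simpa only [map_pow] using
      (isHermitian_regularMatrix hx).isSelfAdjoint.pow_three_eq_self_of_pow_eq_pow hmn
        (by simp only [← map_pow, h])

end MonoidAlgebra

/-- Every element `b` of a multiplicative `ℤ`-basis of the centre of the
integral group algebra `ℤSₙ` satisfies `b ^ 3 = b`. -/
theorem cube_self_of_mem_multiplicative_basis (n : ℕ) {ι : Type}
    (b : Module.Basis ι ℤ (Subalgebra.center ℤ (MonoidAlgebra ℤ (Equiv.Perm (Fin n)))))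
    (hmult : ∀ i j : ι, ∃ k : ι, b i * b j = b k) (i : ι) :
    (b i) ^ 3 = b i := by
  have : Module.Finite ℤ (Subalgebra.center ℤ (MonoidAlgebra ℤ (Equiv.Perm (Fin n)))) :=
    .of_injective (Subalgebra.center ℤ _).val.toLinearMap Subtype.val_injective
  have : Finite ι := Module.Finite.finite_basis b
  obtain ⟨k, l, hkl, hpow⟩ := exists_lt_pow_eq_pow_of_mul_mem_range b i (hmult i)
  apply Subtype.val_injective
  simp only [SubmonoidClass.coe_pow]
  exact MonoidAlgebra.pow_three_eq_self_of_pow_eq_pow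
    (MonoidAlgebra.coeff_inv_of_mem_center (b i).2) hkl
    congr(($hpow : MonoidAlgebra ℤ (Equiv.Perm (Fin n))))
end
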